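/- arXiv:1511.01635 — 2 statements merged into one kernel-verified Lean document; each statement's English description precedes it below -/
import Mathlib

section
/- Let f: ℝⁿ → ℝ be convex differentiable with L-Lipschitz gradient and g: ℝⁿ → ℝ ∪ {+∞} closed convex, and let γ ≥ L. Then for any x̄, the proximal gradient step p(x̄) = argminₓ [f(x̄) + ⟨∇f(x̄), x − x̄⟩ + (γ/2)‖x − x̄‖² + g(x)] satisfies, for all x: φ(x) − φ(p(x̄)) ≥ ⟨G(x̄), x − x̄⟩ + (1/(2γ))‖G(x̄)‖², where φ = f + g and G(x̄) = γ(x̄ − p(x̄)). -/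
/-!
Write `q = p x̄` and `G = γ (x̄ - q)`. Three inequalities add up to the claim: convexity of `f`
bounds `f x` below by its linearization at `x̄`; the descent lemma (Lipschitz gradient, `L ≤ γ`)
bounds `f q` above by the quadratic model at `x̄`; and first-order optimality of `q` for the model
plus `g` says that `G - ∇f x̄` is a subgradient of `g` at `q`. The last one comes from restricting
the model plus the chord of `g` to the segment `[q, x]`, where a minimum at the left endpoint forces
a nonnegative derivative. Where `g x = ⊤` or `g q = ⊥` the claim is trivial, and otherwise the
optimality of `q` forces both values to be finite.
-/

open RealInnerProductSpace Metric Set Filter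

abbrev Euc (n : ℕ) : Type := EuclideanSpace ℝ (Fin n)

theorem nonneg_of_isMinOn_Icc_of_hasDerivAt {φ : ℝ → ℝ} {d : ℝ}
    (hmin : IsMinOn φ (Icc 0 1) 0) (hφ : HasDerivAt φ d 0) : 0 ≤ d := by
  have h1 : (1 : ℝ) ∈ posTangentConeAt (Icc (0 : ℝ) 1) 0 :=
    mem_posTangentConeAt_of_segment_subset (by simp [segment_eq_Icc])
  simpa using hmin.localize.hasFDerivWithinAt_nonneg hφ.hasFDerivAt.hasFDerivWithinAt h1

theorem EReal.exists_coe_of_coe_add_le_coe_add {a b : ℝ} {u w : EReal}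
    (h : (a : EReal) + u ≤ b + w) (hu : u ≠ ⊥) (hw : w ≠ ⊤) : ∃ u' w' : ℝ, u = u' ∧ w = w' := by
  induction u <;> induction w <;> simp_all [← EReal.coe_add]

theorem add_inner_add_sq_le_of_prox_bounds {E : Type*} [NormedAddCommGroup E]
    [InnerProductSpace ℝ E] {u xb q x : E} {γ fxb fx fq gq gx : ℝ} (hγ : 0 < γ)
    (hopt : gq ≤ gx + ⟪u + γ • (q - xb), x - q⟫)
    (hlower : fxb + ⟪u, x - xb⟫ ≤ fx)
    (hupper : fq ≤ fxb + ⟪u, q - xb⟫ + γ / 2 * ‖q - xb‖ ^ 2) :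
    fq + gq + (⟪γ • (xb - q), x - xb⟫ + 1 / (2 * γ) * ‖γ • (xb - q)‖ ^ 2) ≤ fx + gx := by
  have hsq : 1 / (2 * γ) * ‖γ • (xb - q)‖ ^ 2 = γ / 2 * ‖q - xb‖ ^ 2 := by
    rw [norm_smul, norm_sub_rev, Real.norm_of_nonneg hγ.le]
    field_simp
  have hxq : x - q = (x - xb) - (q - xb) := by abel
  rw [hsq, ← neg_sub q xb]
  rw [hxq] at hopt
  generalize q - xb = d at *
  generalize x - xb = e at *
  simp only [inner_add_left, inner_sub_right, inner_neg_left, real_inner_smul_left,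
    real_inner_self_eq_norm_sq] at hopt ⊢
  linarith

section

variable {E : Type*} [NormedAddCommGroup E] [InnerProductSpace ℝ E] [CompleteSpace E]

theorem HasGradientAt.hasDerivAt_comp_lineMap {f : E → ℝ} {v a b : E} {t : ℝ}
    (hf : HasGradientAt f v (AffineMap.lineMap a b t)) :
    HasDerivAt (fun s => f (AffineMap.lineMap a b s)) ⟪v, b - a⟫ t := by
  have := hf.hasFDerivAt.comp_hasDerivAt t AffineMap.hasDerivAt_lineMap
  simp only [InnerProductSpace.toDual_apply_apply] at this
  exact this

theorem ConvexOn.add_inner_gradient_le {f : E → ℝ} {v a : E} (hf : ConvexOn ℝ univ f)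
    (hv : HasGradientAt f v a) (b : E) : f a + ⟪v, b - a⟫ ≤ f b := by
  have hline := (hf.comp_affineMap (AffineMap.lineMap a b)).le_slope_of_hasDerivAt
    (mem_univ 0) (mem_univ 1) zero_lt_one
    (HasGradientAt.hasDerivAt_comp_lineMap (by simpa using hv))
  simp [slope_def_field] at hline
  linarith

theorem le_add_inner_add_sq_of_lipschitz_gradient {f : E → ℝ} {f' : E → E} {L : ℝ}
    (hf : ∀ x, HasGradientAt f (f' x) x) (hLip : ∀ x y, ‖f' x - f' y‖ ≤ L * ‖x - y‖)
    (a b : E) : f b ≤ f a + ⟪f' a, b - a⟫ + L / 2 * ‖b - a‖ ^ 2 := by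
  set d := b - a
  -- `f a + ψ t` is the gap between the quadratic upper model and `f` at `lineMap a b t`
  set ψ : ℝ → ℝ := fun t => t * ⟪f' a, d⟫ + L / 2 * ‖d‖ ^ 2 * t ^ 2 - f (AffineMap.lineMap a b t)
  have hψ : ∀ t, HasDerivAt ψ
      (⟪f' a, d⟫ + L * ‖d‖ ^ 2 * t - ⟪f' (AffineMap.lineMap a b t), d⟫) t := by
    intro t
    have h := (((hasDerivAt_id t).mul_const ⟪f' a, d⟫).add
      ((hasDerivAt_pow 2 t).const_mul (L / 2 * ‖d‖ ^ 2))).sub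
      (hf (AffineMap.lineMap a b t)).hasDerivAt_comp_lineMap
    exact h.congr_deriv (by simp only [d]; ring)
  have hψ_nonneg : ∀ t ∈ interior (Ici (0 : ℝ)),
      0 ≤ ⟪f' a, d⟫ + L * ‖d‖ ^ 2 * t - ⟪f' (AffineMap.lineMap a b t), d⟫ := by
    intro t ht
    rw [interior_Ici, mem_Ioi] at ht
    have hdrift : ‖f' (AffineMap.lineMap a b t) - f' a‖ ≤ L * (t * ‖d‖) := by
      simpa [AffineMap.lineMap_apply, norm_smul, abs_of_pos ht] using
        hLip (AffineMap.lineMap a b t) a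
    have hcs := real_inner_le_norm (f' (AffineMap.lineMap a b t) - f' a) d
    rw [inner_sub_left] at hcs
    nlinarith [norm_nonneg d]
  have hmono : MonotoneOn ψ (Ici 0) :=
    monotoneOn_of_hasDerivWithinAt_nonneg (convex_Ici 0)
      (fun t _ => (hψ t).continuousAt.continuousWithinAt)
      (fun t _ => (hψ t).hasDerivWithinAt) hψ_nonneg
  have h01 := hmono (mem_Ici.2 le_rfl) (mem_Ici.2 zero_le_one) zero_le_one
  simp [ψ] at h01
  linarith

theorem hasGradientAt_add_inner_add_sq (c γ : ℝ) (u z y : E) :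
    HasGradientAt (fun x => c + ⟪u, x - z⟫ + γ / 2 * ‖x - z‖ ^ 2) (u + γ • (y - z)) y := by
  rw [hasGradientAt_iff_hasFDerivAt]
  have hlin := ((innerSL ℝ u).hasFDerivAt (x := y - z)).comp y ((hasFDerivAt_id y).sub_const z)
  have hsq := (((hasFDerivAt_id y).sub_const z).norm_sq).const_mul (γ / 2)
  refine (((hasFDerivAt_const c y).add hlin).add hsq).congr_fderiv ?_
  ext w
  simp
  ring

theorem le_add_inner_of_isMin_add_convex {s : E → ℝ} {g : E → EReal} {v q x : E} {gq gx : ℝ}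
    (hs : HasGradientAt s v q)
    (hg : ∀ x y : E, ∀ a b : ℝ, 0 ≤ a → 0 ≤ b → a + b = 1 →
      g (a • x + b • y) ≤ (a : EReal) * g x + (b : EReal) * g y)
    (hmin : ∀ y, (s q : EReal) + g q ≤ s y + g y) (hgq : g q = gq) (hgx : g x = gx) :
    gq ≤ gx + ⟪v, x - q⟫ := by
  -- `s + g` along `[q, x]`, with `g` replaced by its chord, which lies above it
  set φ : ℝ → ℝ := fun t => s (AffineMap.lineMap q x t) + ((1 - t) * gq + t * gx)
  have hφ : HasDerivAt φ (⟪v, x - q⟫ + (gx - gq)) 0 := by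
    have h := (HasGradientAt.hasDerivAt_comp_lineMap (b := x) (by simpa using hs)).add
      ((((hasDerivAt_id (0 : ℝ)).const_sub 1).mul_const gq).add ((hasDerivAt_id 0).mul_const gx))
    exact h.congr_deriv (by ring)
  have hφ_min : IsMinOn φ (Icc 0 1) 0 := by
    intro t ht
    have hchord := hg q x (1 - t) t (by linarith [ht.2]) ht.1 (by ring)
    rw [hgq, hgx, ← AffineMap.lineMap_apply_module] at hchord
    have h := (hmin (AffineMap.lineMap q x t)).trans (add_le_add_right hchord _)
    rw [hgq] at h
    norm_cast at h
    simpa [φ] using h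
  linarith [nonneg_of_isMinOn_Icc_of_hasDerivAt hφ_min hφ]

end

theorem stmt_5_general {n : ℕ} (L γ : ℝ) (hL : 0 < L) (hγ : γ ≥ L)
    (f : Euc n → ℝ) (f' : Euc n → Euc n) (g : Euc n → EReal)
    (hconv : ConvexOn ℝ Set.univ f)
    (hgrad : ∀ x, HasGradientAt f (f' x) x)
    (hLip : ∀ x y, ‖f' x - f' y‖ ≤ L * ‖x - y‖)
    (hgconv : ∀ x y : Euc n, ∀ a b : ℝ, 0 ≤ a → 0 ≤ b → a + b = 1 →
      g (a • x + b • y) ≤ (a : EReal) * g x + (b : EReal) * g y)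
    (p : Euc n → Euc n)
    (hp : ∀ xb x, ((f xb + ⟪f' xb, p xb - xb⟫ + γ / 2 * ‖p xb - xb‖ ^ 2 : ℝ) : EReal) + g (p xb)
        ≤ ((f xb + ⟪f' xb, x - xb⟫ + γ / 2 * ‖x - xb‖ ^ 2 : ℝ) : EReal) + g x) :
    ∀ xb x, ((f x : EReal) + g x) ≥ ((f (p xb) : EReal) + g (p xb))
      + ((⟪γ • (xb - p xb), x - xb⟫ + 1 / (2 * γ) * ‖γ • (xb - p xb)‖ ^ 2 : ℝ) : EReal) := by
  intro xb x
  set q := p xb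
  rcases eq_or_ne (g x) ⊤ with hx | hx
  · simp [hx]
  rcases eq_or_ne (g q) ⊥ with hq | hq
  · simp [hq]
  obtain ⟨gq, gx, hgq, hgx⟩ := EReal.exists_coe_of_coe_add_le_coe_add (hp xb x) hq hx
  have hopt := le_add_inner_of_isMin_add_convex (hasGradientAt_add_inner_add_sq _ _ _ _ q)
    hgconv (hp xb) hgq hgx
  have hlower := hconv.add_inner_gradient_le (hgrad xb) x
  have hupper := (le_add_inner_add_sq_of_lipschitz_gradient hgrad hLip xb q).trans
    (by gcongr : _ ≤ f xb + ⟪f' xb, q - xb⟫ + γ / 2 * ‖q - xb‖ ^ 2)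
  rw [ge_iff_le, hgq, hgx]
  norm_cast
  exact add_inner_add_sq_le_of_prox_bounds (hL.trans_le hγ) hopt hlower hupper

theorem stmt_5 {n : ℕ} (L γ : ℝ) (hL : 0 < L) (hγ : γ ≥ L)
    (f : Euc n → ℝ) (f' : Euc n → Euc n) (g : Euc n → EReal)
    (hconv : ConvexOn ℝ Set.univ f)
    (hgrad : ∀ x, HasGradientAt f (f' x) x)
    (hLip : ∀ x y, ‖f' x - f' y‖ ≤ L * ‖x - y‖)
    (hgbot : ∀ x, g x ≠ ⊥) (hgtop : ∃ x, g x ≠ ⊤)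
    (hglsc : LowerSemicontinuous g)
    (hgconv : ∀ x y : Euc n, ∀ a b : ℝ, 0 ≤ a → 0 ≤ b → a + b = 1 →
      g (a • x + b • y) ≤ (a : EReal) * g x + (b : EReal) * g y)
    (p : Euc n → Euc n)
    (hp : ∀ xb x, ((f xb + ⟪f' xb, p xb - xb⟫ + γ / 2 * ‖p xb - xb‖ ^ 2 : ℝ) : EReal) + g (p xb)
        ≤ ((f xb + ⟪f' xb, x - xb⟫ + γ / 2 * ‖x - xb‖ ^ 2 : ℝ) : EReal) + g x) :
    ∀ xb x, ((f x : EReal) + g x) ≥ ((f (p xb) : EReal) + g (p xb))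
      + ((⟪γ • (xb - p xb), x - xb⟫ + 1 / (2 * γ) * ‖γ • (xb - p xb)‖ ^ 2 : ℝ) : EReal) :=
  stmt_5_general L γ hL hγ f f' g hconv hgrad hLip hgconv p hp
end

section
/- Consider minimizing f(x) = g(Ex) over the polyhedron Q = {x : Ax ≤ b}, where g is μ-strongly convex with L-Lipschitz gradient, 𝒳 = argmin_{x∈Q} f is nonempty, and γ ≥ L‖EEᵀ‖. Then there exists C₁ > 0 (depending on E, A, μ) such that the strengthened restricted strong convexity property holds: ⟨G(y), y − proj_𝒳(y)⟩ ≥ (1/(2γ))‖G(y)‖² + C₁·d²(y, 𝒳) for all y ∈ Q, where G(y) = γ(y − x_Q(y;γ)) is the gradient mapping of f on Q. -/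
/-
Strong convexity of `g` gives a lower bound for `g (A x)`, the descent lemma (with
`γ ≥ L‖A‖²`) an upper bound for `g (A (xQ y))`, and the first-order optimality of `xQ y` for
the quadratic model links the two, so that for every `x ∈ Q`
  `g (A x) ≥ g (A (xQ y)) + ⟪G(y), x - y⟫ + ‖G(y)‖² / (2γ) + (μ/2) ‖A x - A y‖²`.
Taking for `x` the projection `q` of `y` onto `X` and using `g (A q) ≤ g (A (xQ y))` leaves
the term `(μ/2) ‖A y - A q‖²`, which a Hoffman-type bound controls by `c² ‖y - q‖²`: the
vector `y - q` lies in the polar of the feasible directions at `q` that stay in `ker A`, and for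
each of the finitely many active sets these vectors form a closed cone meeting `ker A` only in
`0`, so compactness of the unit sphere yields `c > 0`.
-/

open RealInnerProductSpace Metric Set Filter

open Topology ContinuousLinearMap

theorem le_apply_one_of_mul_le_deriv_sub {φ φ' : ℝ → ℝ} {c : ℝ}
    (hφ : ∀ s, HasDerivAt φ (φ' s) s) (h : ∀ s ∈ Icc (0 : ℝ) 1, c * s ≤ φ' s - φ' 0) :
    φ 0 + φ' 0 + c / 2 ≤ φ 1 := by
  set ψ : ℝ → ℝ := fun s => φ s - s * φ' 0 - c / 2 * s ^ 2
  have hψ : ∀ s, HasDerivAt ψ (φ' s - φ' 0 - c * s) s := fun s =>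
    (((hφ s).sub ((hasDerivAt_id s).mul_const (φ' 0))).sub
      ((hasDerivAt_pow 2 s).const_mul (c / 2))).congr_deriv (by norm_num; ring)
  have hmono : MonotoneOn ψ (Icc 0 1) := by
    refine monotoneOn_of_deriv_nonneg (convex_Icc 0 1)
      (fun s _ => (hψ s).continuousAt.continuousWithinAt)
      (fun s _ => (hψ s).differentiableAt.differentiableWithinAt) fun s hs => ?_
    rw [interior_Icc] at hs
    rw [(hψ s).deriv]
    linarith [h s (Ioo_subset_Icc_self hs)]
  have := hmono (left_mem_Icc.2 zero_le_one) (right_mem_Icc.2 zero_le_one) zero_le_one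
  simp only [ψ] at this
  linarith

section Smooth

variable {E : Type*} [NormedAddCommGroup E] [InnerProductSpace ℝ E] [CompleteSpace E]
  {g : E → ℝ} {g' : E → E}

theorem HasGradientAt.hasDerivAt_comp_add_smul {g' v w : E} {s : ℝ}
    (hg : HasGradientAt g g' (v + s • w)) :
    HasDerivAt (fun t : ℝ => g (v + t • w)) ⟪g', w⟫ s := by
  have hline : HasDerivAt (fun t : ℝ => v + t • w) w s := by
    simpa using ((hasDerivAt_id s).smul_const w).const_add v
  simpa [Function.comp_def] using hg.hasFDerivAt.comp_hasDerivAt s hline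

theorem le_apply_of_strongly_monotone_gradient {μ : ℝ} (hg : ∀ u, HasGradientAt g (g' u) u)
    (hmono : ∀ u v, μ * ‖u - v‖ ^ 2 ≤ ⟪g' u - g' v, u - v⟫) (u v : E) :
    g v + ⟪g' v, u - v⟫ + μ / 2 * ‖u - v‖ ^ 2 ≤ g u := by
  set w := u - v
  have hφ (s : ℝ) := (hg (v + s • w)).hasDerivAt_comp_add_smul
  have key : ∀ s ∈ Icc (0 : ℝ) 1,
      μ * ‖w‖ ^ 2 * s ≤ ⟪g' (v + s • w), w⟫ - ⟪g' (v + (0 : ℝ) • w), w⟫ := by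
    rintro s ⟨hs0, -⟩
    rcases hs0.eq_or_lt with rfl | hs
    · simp
    have := hmono (v + s • w) v
    rw [add_sub_cancel_left, real_inner_smul_right, norm_smul, Real.norm_of_nonneg hs0] at this
    rw [zero_smul, add_zero, ← inner_sub_left]
    exact le_of_mul_le_mul_left (by linarith) hs
  have := le_apply_one_of_mul_le_deriv_sub hφ key
  simp only [zero_smul, add_zero, one_smul, w, add_sub_cancel] at this
  linarith

theorem apply_le_of_lipschitz_gradient {L : ℝ} (hg : ∀ u, HasGradientAt g (g' u) u)
    (hLip : ∀ u v, ‖g' u - g' v‖ ≤ L * ‖u - v‖) (u v : E) :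
    g u ≤ g v + ⟪g' v, u - v⟫ + L / 2 * ‖u - v‖ ^ 2 := by
  set w := u - v
  have hφ (s : ℝ) := ((hg (v + s • w)).hasDerivAt_comp_add_smul).neg
  have key : ∀ s ∈ Icc (0 : ℝ) 1,
      -(L * ‖w‖ ^ 2) * s ≤ -⟪g' (v + s • w), w⟫ - -⟪g' (v + (0 : ℝ) • w), w⟫ := by
    rintro s ⟨hs0, -⟩
    have := hLip (v + s • w) v
    rw [add_sub_cancel_left, norm_smul, Real.norm_of_nonneg hs0] at this
    have hCS := real_inner_le_norm (g' (v + s • w) - g' v) w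
    rw [inner_sub_left] at hCS
    rw [zero_smul, add_zero]
    nlinarith [mul_le_mul_of_nonneg_right this (norm_nonneg w)]
  have := le_apply_one_of_mul_le_deriv_sub hφ key
  simp only [Pi.neg_apply, zero_smul, add_zero, one_smul, w, add_sub_cancel] at this
  linarith

end Smooth

theorem inner_smul_sub_le_of_isMinOn_model {E : Type*} [NormedAddCommGroup E]
    [InnerProductSpace ℝ E] {Q : Set E} (hQ : Convex ℝ Q) {c y x₀ : E} {γ : ℝ}
    (hx₀ : x₀ ∈ Q)
    (hmin : ∀ x ∈ Q, ⟪c, x₀ - y⟫ + γ / 2 * ‖x₀ - y‖ ^ 2 ≤ ⟪c, x - y⟫ + γ / 2 * ‖x - y‖ ^ 2)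
    {z : E} (hz : z ∈ Q) : ⟪γ • (y - x₀), z - x₀⟫ ≤ ⟪c, z - x₀⟫ := by
  have hy := (hasFDerivAt_id (𝕜 := ℝ) x₀).sub_const y
  have hf := ((innerSL ℝ c).hasFDerivAt.comp x₀ hy).add (hy.norm_sq.const_mul (γ / 2))
  have := (isMinOn_iff.2 hmin).localize.hasFDerivWithinAt_nonneg hf.hasFDerivWithinAt
    (sub_mem_posTangentConeAt_of_segment_subset (hQ.segment_subset hx₀ hz))
  simp only [ContinuousLinearMap.comp_id, id_eq, map_sub, add_apply, coe_innerSL_apply,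
    smul_apply, sub_apply, nsmul_eq_mul, Nat.cast_ofNat, smul_eq_mul] at this
  rw [real_inner_smul_left]
  simp only [inner_sub_left, inner_sub_right] at this ⊢
  linarith

theorem ContinuousLinearMap.norm_self_comp_adjoint {𝕜 E F : Type*} [RCLike 𝕜]
    [NormedAddCommGroup E] [InnerProductSpace 𝕜 E] [CompleteSpace E] [NormedAddCommGroup F]
    [InnerProductSpace 𝕜 F] [CompleteSpace F] (A : E →L[𝕜] F) :
    ‖A ∘L adjoint A‖ = ‖A‖ * ‖A‖ := by
  simpa using norm_adjoint_comp_self (adjoint A)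

theorem le_apply_of_isMinOn_model {E F : Type*} [NormedAddCommGroup E] [InnerProductSpace ℝ E]
    [CompleteSpace E] [NormedAddCommGroup F] [InnerProductSpace ℝ F] [CompleteSpace F]
    {g : F → ℝ} {g' : F → F} {μ L γ : ℝ} (hL : 0 ≤ L) (hg : ∀ u, HasGradientAt g (g' u) u)
    (hmono : ∀ u v, μ * ‖u - v‖ ^ 2 ≤ ⟪g' u - g' v, u - v⟫)
    (hLip : ∀ u v, ‖g' u - g' v‖ ≤ L * ‖u - v‖) (A : E →L[ℝ] F) (hγ : L * ‖A‖ ^ 2 ≤ γ)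
    {Q : Set E} (hQ : Convex ℝ Q) {y x₀ : E} (hx₀ : x₀ ∈ Q)
    (hmin : ∀ x ∈ Q, ⟪adjoint A (g' (A y)), x₀ - y⟫ + γ / 2 * ‖x₀ - y‖ ^ 2
      ≤ ⟪adjoint A (g' (A y)), x - y⟫ + γ / 2 * ‖x - y‖ ^ 2)
    {x : E} (hx : x ∈ Q) :
    g (A x₀) + ⟪γ • (y - x₀), x - y⟫ + 1 / (2 * γ) * ‖γ • (y - x₀)‖ ^ 2
      + μ / 2 * ‖A x - A y‖ ^ 2 ≤ g (A x) := by
  set d := adjoint A (g' (A y))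
  have hadj (z : E) : ⟪g' (A y), A z - A y⟫ = ⟪d, z - y⟫ := by
    rw [← map_sub, adjoint_inner_left]
  have hlower := le_apply_of_strongly_monotone_gradient hg hmono (A x) (A y)
  have hupper := apply_le_of_lipschitz_gradient hg hLip (A x₀) (A y)
  have hopt := inner_smul_sub_le_of_isMinOn_model hQ hx₀ hmin hx
  have hdescent : L * ‖A x₀ - A y‖ ^ 2 ≤ γ * ‖x₀ - y‖ ^ 2 :=
    calc L * ‖A x₀ - A y‖ ^ 2 ≤ L * (‖A‖ * ‖x₀ - y‖) ^ 2 := by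
          rw [← map_sub]; gcongr; exact A.le_opNorm _
      _ = L * ‖A‖ ^ 2 * ‖x₀ - y‖ ^ 2 := by ring
      _ ≤ γ * ‖x₀ - y‖ ^ 2 := by gcongr
  have hG : 1 / (2 * γ) * ‖γ • (y - x₀)‖ ^ 2 = γ / 2 * ‖x₀ - y‖ ^ 2 := by
    rw [norm_smul, norm_sub_rev, Real.norm_eq_abs, mul_pow, sq_abs]
    rcases eq_or_ne γ 0 with rfl | hγ0
    · simp
    · field_simp
  have hsplit : ⟪γ • (y - x₀), x - x₀⟫ = ⟪γ • (y - x₀), x - y⟫ + γ * ‖x₀ - y‖ ^ 2 := by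
    rw [← sub_add_sub_cancel x y x₀, inner_add_right, real_inner_smul_left (y - x₀) (y - x₀),
      real_inner_self_eq_norm_sq, norm_sub_rev]
  rw [hadj] at hlower hupper
  have hd : ⟪d, x - x₀⟫ = ⟪d, x - y⟫ - ⟪d, x₀ - y⟫ := by
    rw [← inner_sub_right, sub_sub_sub_cancel_right]
  linarith

section Polyhedron

variable {E : Type*} [NormedAddCommGroup E] [InnerProductSpace ℝ E]

def polyhedron {ι : Type*} (a : ι → E) (b : ι → ℝ) : Set E := {x | ∀ j, ⟪a j, x⟫ ≤ b j}

theorem convex_polyhedron {ι : Type*} (a : ι → E) (b : ι → ℝ) : Convex ℝ (polyhedron a b) := by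
  simp only [polyhedron, ofPred_forall]
  exact convex_iInter fun j => convex_halfSpace_le (innerₛₗ ℝ (a j)).isLinear (b j)

theorem eventually_add_smul_mem_polyhedron {ι : Type*} [Finite ι] {a : ι → E} {b : ι → ℝ}
    {q u : E} (hq : q ∈ polyhedron a b) (hu : ∀ j, ⟪a j, q⟫ = b j → ⟪a j, u⟫ ≤ 0) :
    ∀ᶠ ε in 𝓝[>] (0 : ℝ), q + ε • u ∈ polyhedron a b := by
  refine eventually_all.2 fun j => ?_
  rcases (hq j).eq_or_lt with hj | hj
  · filter_upwards [self_mem_nhdsWithin] with ε (hε : 0 < ε)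
    rw [inner_add_right, real_inner_smul_right]
    nlinarith [hu j hj]
  · have hcont : Continuous fun ε : ℝ => ⟪a j, q + ε • u⟫ := by fun_prop
    exact nhdsWithin_le_nhds <| ((hcont.continuousAt (x := 0)).eventually_lt
      (continuousAt_const (y := b j)) (by simpa using hj)).mono fun _ => le_of_lt

theorem inner_nonpos_of_eventually_norm_le_norm_sub_smul {v u : E}
    (h : ∀ᶠ ε in 𝓝[>] (0 : ℝ), ‖v‖ ≤ ‖v - ε • u‖) : ⟪v, u⟫ ≤ 0 := by
  have hlim : Tendsto (fun ε : ℝ => ε / 2 * ‖u‖ ^ 2) (𝓝[>] 0) (𝓝 0) := by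
    have : Continuous fun ε : ℝ => ε / 2 * ‖u‖ ^ 2 := by fun_prop
    exact (this.tendsto' 0 0 (by simp)).mono_left nhdsWithin_le_nhds
  refine ge_of_tendsto hlim ?_
  filter_upwards [h, self_mem_nhdsWithin] with ε hε (hpos : 0 < ε)
  have hsq := pow_le_pow_left₀ (norm_nonneg v) hε 2
  rw [norm_sub_sq_real, real_inner_smul_right, norm_smul, Real.norm_of_nonneg hpos.le] at hsq
  nlinarith

end Polyhedron

theorem exists_pos_mul_norm_le_norm_map_of_isClosed_cone {V W : Type*} [NormedAddCommGroup V]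
    [NormedSpace ℝ V] [ProperSpace V] [NormedAddCommGroup W] [NormedSpace ℝ W] (A : V →L[ℝ] W)
    {S : Set V} (hS : IsClosed S) (hcone : ∀ v ∈ S, ∀ t : ℝ, 0 < t → t • v ∈ S)
    (hker : ∀ v ∈ S, A v = 0 → v = 0) : ∃ c > 0, ∀ v ∈ S, c * ‖v‖ ≤ ‖A v‖ := by
  obtain ⟨c, hc, hcS⟩ := ((isCompact_sphere (0 : V) 1).inter_right hS).exists_forall_le'
    A.continuous.norm.continuousOn (a := 0) fun v ⟨hv1, hvS⟩ =>
      norm_pos_iff.2 fun hAv => by simp [hker v hvS hAv] at hv1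
  refine ⟨c, hc, fun v hv => ?_⟩
  rcases eq_or_ne v 0 with rfl | hv0
  · simp
  have hvpos : 0 < ‖v‖ := norm_pos_iff.2 hv0
  have := hcS (‖v‖⁻¹ • v) ⟨by simp [norm_smul, hv0], hcone v hv _ (inv_pos.2 hvpos)⟩
  rw [map_smul, norm_smul, Real.norm_of_nonneg (inv_nonneg.2 hvpos.le)] at this
  rwa [le_inv_mul_iff₀ hvpos, mul_comm] at this

section Hoffman

variable {E W : Type*} [NormedAddCommGroup E] [InnerProductSpace ℝ E] [FiniteDimensional ℝ E]
  [NormedAddCommGroup W] [NormedSpace ℝ W]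

theorem exists_pos_mul_norm_le_norm_map_of_mem_polar (A : E →L[ℝ] W) {C : Set E}
    (hC : IsClosed C) (hcone : ∀ v ∈ C, ∀ t : ℝ, 0 < t → t • v ∈ C) :
    ∃ c > 0, ∀ v ∈ C, (∀ u ∈ C, A u = 0 → ⟪v, u⟫ ≤ 0) → c * ‖v‖ ≤ ‖A v‖ := by
  have hpolar : IsClosed {v : E | ∀ u ∈ C, A u = 0 → ⟪v, u⟫ ≤ 0} := by
    simp only [ofPred_forall]
    exact isClosed_iInter fun u => isClosed_iInter fun _ => isClosed_iInter fun _ =>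
      isClosed_le (by fun_prop) continuous_const
  obtain ⟨c, hc, hcS⟩ := exists_pos_mul_norm_le_norm_map_of_isClosed_cone A (hC.inter hpolar)
    (fun v ⟨hvC, hv⟩ t ht => ⟨hcone v hvC t ht, fun u hu hAu => by
      rw [real_inner_smul_left]; exact mul_nonpos_of_nonneg_of_nonpos ht.le (hv u hu hAu)⟩)
    fun v ⟨hvC, hv⟩ hAv => real_inner_self_nonpos.1 (hv v hvC hAv)
  exact ⟨c, hc, fun v hvC hv => hcS v ⟨hvC, hv⟩⟩

theorem exists_pos_mul_norm_sub_le_of_isNearest_polyhedron {ι : Type*} [Finite ι]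
    (A : E →L[ℝ] W) (a : ι → E) (b : ι → ℝ) :
    ∃ c > 0, ∀ y ∈ polyhedron a b, ∀ q ∈ polyhedron a b,
      (∀ x ∈ polyhedron a b, A x = A q → ‖y - q‖ ≤ ‖y - x‖) → c * ‖y - q‖ ≤ ‖A y - A q‖ := by
  have hface (J : Set ι) := exists_pos_mul_norm_le_norm_map_of_mem_polar A
    (C := {v | ∀ j ∈ J, ⟪a j, v⟫ ≤ 0})
    (by
      simp only [ofPred_forall]
      exact isClosed_iInter fun j => isClosed_iInter fun _ =>
        isClosed_le (by fun_prop) continuous_const)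
    fun v hv t ht j hj => by
      rw [real_inner_smul_right]; exact mul_nonpos_of_nonneg_of_nonpos ht.le (hv j hj)
  choose c hc hcJ using hface
  obtain ⟨J₀, hJ₀⟩ := Finite.exists_min c
  refine ⟨c J₀, hc J₀, fun y hy q hq hnear => ?_⟩
  set J := {j | ⟪a j, q⟫ = b j}
  have hyq : ∀ j ∈ J, ⟪a j, y - q⟫ ≤ 0 := fun j (hj : _ = _) => by
    rw [inner_sub_right, hj]; linarith [hy j]
  have hpolar : ∀ u ∈ {v | ∀ j ∈ J, ⟪a j, v⟫ ≤ 0}, A u = 0 → ⟪y - q, u⟫ ≤ 0 := by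
    intro u hu hAu
    refine inner_nonpos_of_eventually_norm_le_norm_sub_smul ?_
    filter_upwards [eventually_add_smul_mem_polyhedron hq hu] with ε hε
    simpa [sub_sub] using hnear _ hε (by simp [hAu])
  calc c J₀ * ‖y - q‖ ≤ c J * ‖y - q‖ := mul_le_mul_of_nonneg_right (hJ₀ J) (norm_nonneg _)
    _ ≤ ‖A (y - q)‖ := hcJ J (y - q) hyq hpolar
    _ = ‖A y - A q‖ := by rw [map_sub]

end Hoffman

theorem stmt_13_general {n m k : ℕ} (μ L γ : ℝ) (hμ : 0 < μ) (hL : 0 < L)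
    (g : Euc m → ℝ) (g' : Euc m → Euc m)
    (hgrad : ∀ u, HasGradientAt g (g' u) u)
    (hSC : ∀ u v, ⟪g' u - g' v, u - v⟫ ≥ μ * ‖u - v‖ ^ 2)
    (hLip : ∀ u v, ‖g' u - g' v‖ ≤ L * ‖u - v‖)
    (A : Euc n →L[ℝ] Euc m)
    (hγ : γ ≥ L * ‖A.comp (ContinuousLinearMap.adjoint A)‖)
    (a : Fin k → Euc n) (b : Fin k → ℝ)
    (Q : Set (Euc n)) (hQ : Q = {x | ∀ j, ⟪a j, x⟫ ≤ b j})
    (X : Set (Euc n)) (hX : X = {x ∈ Q | ∀ y ∈ Q, g (A x) ≤ g (A y)})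
    (xQ : Euc n → Euc n)
    (hxQ : ∀ xb, xQ xb ∈ Q ∧ ∀ x ∈ Q,
      g (A xb) + ⟪ContinuousLinearMap.adjoint A (g' (A xb)), xQ xb - xb⟫ + γ / 2 * ‖xQ xb - xb‖ ^ 2
        ≤ g (A xb) + ⟪ContinuousLinearMap.adjoint A (g' (A xb)), x - xb⟫ + γ / 2 * ‖x - xb‖ ^ 2) :
    ∃ C₁ : ℝ, 0 < C₁ ∧ ∀ y ∈ Q, ∀ q ∈ X, dist y q = Metric.infDist y X →
      ⟪γ • (y - xQ y), y - q⟫ ≥ 1 / (2 * γ) * ‖γ • (y - xQ y)‖ ^ 2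
        + C₁ * (Metric.infDist y X) ^ 2 := by
  change Q = polyhedron a b at hQ
  subst hQ
  obtain ⟨c, hc, hHoffman⟩ := exists_pos_mul_norm_sub_le_of_isNearest_polyhedron A a b
  refine ⟨μ * c ^ 2 / 2, by positivity, fun y hy q hq hdist => ?_⟩
  rw [hX] at hq
  obtain ⟨hqQ, hqmin⟩ := hq
  have hnear : ∀ x ∈ polyhedron a b, A x = A q → ‖y - q‖ ≤ ‖y - x‖ := fun x hx hAx => by
    rw [← dist_eq_norm, ← dist_eq_norm, hdist]
    exact infDist_le_dist_of_mem (by rw [hX]; exact ⟨hx, by rw [hAx]; exact hqmin⟩)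
  have hdist_le : c * infDist y X ≤ ‖A q - A y‖ := by
    rw [← hdist, dist_eq_norm, norm_sub_rev (A q)]
    exact hHoffman y hy q hqQ hnear
  have hγ' : L * ‖A‖ ^ 2 ≤ γ := by rw [sq, ← A.norm_self_comp_adjoint]; exact hγ
  have hmodel := le_apply_of_isMinOn_model (y := y) hL.le hgrad hSC hLip A hγ'
    (convex_polyhedron a b) (hxQ y).1 (fun x hx => by linarith [(hxQ y).2 x hx]) hqQ
  have hqx₀ := hqmin _ (hxQ y).1
  have hsq := pow_le_pow_left₀ (mul_nonneg hc.le infDist_nonneg) hdist_le 2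
  rw [ge_iff_le, ← neg_sub q y, inner_neg_right]
  nlinarith

theorem stmt_13 {n m k : ℕ} (μ L γ : ℝ) (hμ : 0 < μ) (hL : 0 < L)
    (g : Euc m → ℝ) (g' : Euc m → Euc m)
    (hgrad : ∀ u, HasGradientAt g (g' u) u)
    (hSC : ∀ u v, ⟪g' u - g' v, u - v⟫ ≥ μ * ‖u - v‖ ^ 2)
    (hLip : ∀ u v, ‖g' u - g' v‖ ≤ L * ‖u - v‖)
    (A : Euc n →L[ℝ] Euc m)
    (hγ : γ ≥ L * ‖A.comp (ContinuousLinearMap.adjoint A)‖)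
    (a : Fin k → Euc n) (b : Fin k → ℝ)
    (Q : Set (Euc n)) (hQ : Q = {x | ∀ j, ⟪a j, x⟫ ≤ b j})
    (X : Set (Euc n)) (hX : X = {x ∈ Q | ∀ y ∈ Q, g (A x) ≤ g (A y)})
    (hne : X.Nonempty)
    (xQ : Euc n → Euc n)
    (hxQ : ∀ xb, xQ xb ∈ Q ∧ ∀ x ∈ Q,
      g (A xb) + ⟪ContinuousLinearMap.adjoint A (g' (A xb)), xQ xb - xb⟫ + γ / 2 * ‖xQ xb - xb‖ ^ 2
        ≤ g (A xb) + ⟪ContinuousLinearMap.adjoint A (g' (A xb)), x - xb⟫ + γ / 2 * ‖x - xb‖ ^ 2) :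
    ∃ C₁ : ℝ, 0 < C₁ ∧ ∀ y ∈ Q, ∀ q ∈ X, dist y q = Metric.infDist y X →
      ⟪γ • (y - xQ y), y - q⟫ ≥ 1 / (2 * γ) * ‖γ • (y - xQ y)‖ ^ 2
        + C₁ * (Metric.infDist y X) ^ 2 :=
  stmt_13_general μ L γ hμ hL g g' hgrad hSC hLip A hγ a b Q hQ X hX xQ hxQ
end
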